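/- Let B_{2k}(n) = q^{2kn} C(n,k)_{q^2} and B_{2k+1}(n) = q^{2(k+1)n} C(n,k)_{q^2} be the interlaced product basis. Then: (i) q^{2n} B_{2k}(n) = B_{2k+1}(n); (ii) q^{2n} B_{2k+1}(n) = q^{2k} B_{2k+1}(n) + q^{2k}(q^{2k+2} - 1) B_{2k+2}(n); (iii) B_{2k}(n+1) = q^{2k} B_{2k-1}(n) + q^{4k} B_{2k}(n) for k ≥ 1; (iv) B_{2k+1}(n+1) = q^{4k} B_{2k-1}(n) + q^{4k}(q^{2k} - 1) B_{2k}(n) + q^{4k+2} B_{2k+1}(n) for k ≥ 1. -/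
import Mathlib


open Finset

/-- q-Pochhammer symbol (a;q)_n. -/
noncomputable def qPoch {K : Type*} [Field K] (q a : K) (n : ℕ) : K :=
  ∏ j ∈ Finset.range n, (1 - a * q ^ j)

/-- Gaussian (q-)binomial coefficient. -/
noncomputable def qbinom {K : Type*} [Field K] (q : K) (n k : ℕ) : K :=
  if k ≤ n then qPoch q q n / (qPoch q q k * qPoch q q (n - k)) else 0

section Aux

variable {K : Type*} [Field K] {Q : K} (hQ : ∀ m : ℕ, 1 ≤ m → Q ^ m ≠ 1)

lemma qPoch_succ' (n : ℕ) : qPoch Q Q (n + 1) = qPoch Q Q n * (1 - Q ^ (n + 1)) := by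
  rw [qPoch, Finset.prod_range_succ, ← qPoch, pow_succ']

lemma qPoch_zero' : qPoch Q Q 0 = 1 := by simp [qPoch]

include hQ

lemma qPoch_ne_zero' (n : ℕ) : qPoch Q Q n ≠ 0 := by
  rw [qPoch]
  apply Finset.prod_ne_zero_iff.2
  intro j _
  intro h
  have : Q ^ (j + 1) = 1 := by
    have := sub_eq_zero.mp h
    rw [pow_succ']
    exact this.symm
  exact hQ (j + 1) (by omega) this

lemma lemA (n k : ℕ) :
    Q ^ n * qbinom Q n k =
      Q ^ k * qbinom Q n k + Q ^ k * (Q ^ (k + 1) - 1) * qbinom Q n (k + 1) := by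
  rcases lt_trichotomy n k with h | rfl | h
  · rw [qbinom, qbinom, if_neg (by omega), if_neg (by omega)]; ring
  · rw [qbinom, qbinom, if_pos le_rfl, if_neg (by omega)]; ring
  · obtain ⟨m, rfl⟩ : ∃ m, n = k + 1 + m := ⟨n - (k + 1), by omega⟩
    rw [qbinom, qbinom, if_pos (by omega), if_pos (by omega),
      show k + 1 + m - k = m + 1 by omega, show k + 1 + m - (k + 1) = m by omega,
      qPoch_succ' m, qPoch_succ' k]
    have h1 : qPoch Q Q k ≠ 0 := qPoch_ne_zero' hQ k
    have h2 : qPoch Q Q m ≠ 0 := qPoch_ne_zero' hQ m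
    have h3 : (1 : K) - Q ^ (k + 1) ≠ 0 := fun h => hQ (k + 1) (by omega) (by
      have := sub_eq_zero.mp h; exact this.symm)
    have h4 : (1 : K) - Q ^ (m + 1) ≠ 0 := fun h => hQ (m + 1) (by omega) (by
      have := sub_eq_zero.mp h; exact this.symm)
    field_simp
    ring

lemma lemB (n k : ℕ) :
    qbinom Q (n + 1) (k + 1) = qbinom Q n k + Q ^ (k + 1) * qbinom Q n (k + 1) := by
  rcases lt_trichotomy n k with h | rfl | h
  · rw [qbinom, qbinom, qbinom, if_neg (by omega), if_neg (by omega), if_neg (by omega)]; ring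
  · rw [qbinom, qbinom, qbinom, if_pos le_rfl, if_pos le_rfl, if_neg (by omega),
      Nat.sub_self]
    have h1 : qPoch Q Q n ≠ 0 := qPoch_ne_zero' hQ n
    have h2 : qPoch Q Q (n + 1) ≠ 0 := qPoch_ne_zero' hQ (n + 1)
    simp [qPoch_zero']
    field_simp
  · obtain ⟨m, rfl⟩ : ∃ m, n = k + 1 + m := ⟨n - (k + 1), by omega⟩
    rw [qbinom, qbinom, qbinom, if_pos (by omega), if_pos (by omega), if_pos (by omega),
      show k + 1 + m + 1 - (k + 1) = m + 1 by omega, show k + 1 + m - k = m + 1 by omega,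
      show k + 1 + m - (k + 1) = m by omega,
      show k + 1 + m + 1 = (k + 1 + m) + 1 by ring, qPoch_succ' (k + 1 + m),
      qPoch_succ' m, qPoch_succ' k]
    have h1 : qPoch Q Q k ≠ 0 := qPoch_ne_zero' hQ k
    have h2 : qPoch Q Q m ≠ 0 := qPoch_ne_zero' hQ m
    have h5 : qPoch Q Q (k + 1 + m) ≠ 0 := qPoch_ne_zero' hQ (k + 1 + m)
    have h3 : (1 : K) - Q ^ (k + 1) ≠ 0 := fun h => hQ (k + 1) (by omega) (by
      have := sub_eq_zero.mp h; exact this.symm)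
    have h4 : (1 : K) - Q ^ (m + 1) ≠ 0 := fun h => hQ (m + 1) (by omega) (by
      have := sub_eq_zero.mp h; exact this.symm)
    field_simp
    ring

end Aux

lemma ratX_pow_ne_one (m : ℕ) (hm : 1 ≤ m) :
    ((RatFunc.X : RatFunc ℚ) ^ 2) ^ m ≠ 1 := by
  intro h
  rw [← pow_mul, ← RatFunc.algebraMap_X (K := ℚ), ← map_pow, ← map_one
    (algebraMap (Polynomial ℚ) (RatFunc ℚ))] at h
  have := RatFunc.algebraMap_injective (K := ℚ) h
  have hd := congrArg Polynomial.natDegree this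
  simp [Polynomial.natDegree_X_pow] at hd
  omega

/-- Compatibilities of the interlaced product basis of the q^2-power basis with the
q^2-binomial basis. -/
theorem product_basis_compatibilities (q : RatFunc ℚ) (hq : q = RatFunc.X)
    (B : ℕ → ℕ → RatFunc ℚ)
    (hBe : ∀ k n : ℕ, B (2 * k) n = q ^ (2 * k * n) * qbinom (q ^ 2) n k)
    (hBo : ∀ k n : ℕ, B (2 * k + 1) n = q ^ (2 * (k + 1) * n) * qbinom (q ^ 2) n k) :
    ∀ n k : ℕ,
      (q ^ (2 * n) * B (2 * k) n = B (2 * k + 1) n) ∧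
      (q ^ (2 * n) * B (2 * k + 1) n =
        q ^ (2 * k) * B (2 * k + 1) n + q ^ (2 * k) * (q ^ (2 * k + 2) - 1) * B (2 * k + 2) n) ∧
      (1 ≤ k → B (2 * k) (n + 1) =
        q ^ (2 * k) * B (2 * k - 1) n + q ^ (4 * k) * B (2 * k) n) ∧
      (1 ≤ k → B (2 * k + 1) (n + 1) =
        q ^ (4 * k) * B (2 * k - 1) n + q ^ (4 * k) * (q ^ (2 * k) - 1) * B (2 * k) n
          + q ^ (4 * k + 2) * B (2 * k + 1) n) := by
  have hQ : ∀ m : ℕ, 1 ≤ m → (q ^ 2) ^ m ≠ 1 := by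
    subst hq; exact ratX_pow_ne_one
  intro n k
  refine ⟨?_, ?_, ?_, ?_⟩
  · rw [hBe, hBo]; ring
  · rw [hBo, show 2 * k + 2 = 2 * (k + 1) by ring, hBe]
    have hA := lemA hQ n k
    linear_combination q ^ (2 * (k + 1) * n) * hA
  · intro hk
    obtain ⟨j, rfl⟩ : ∃ j, k = j + 1 := ⟨k - 1, by omega⟩
    rw [show 2 * (j + 1) - 1 = 2 * j + 1 by omega, hBe, hBe, hBo]
    have hB := lemB hQ n j
    linear_combination q ^ (2 * (j + 1) * (n + 1)) * hB
  · intro hk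
    obtain ⟨j, rfl⟩ : ∃ j, k = j + 1 := ⟨k - 1, by omega⟩
    rw [show 2 * (j + 1) - 1 = 2 * j + 1 by omega, hBo, hBo, hBo, hBe]
    have hB := lemB hQ n j
    have hA := lemA hQ n j
    linear_combination q ^ (2 * (j + 2) * (n + 1)) * hB +
      q ^ (2 * (j + 1) * n + 2 * (j + 2)) * hA
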